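/- Let ε ∈ (0,1), and let v = (v_1,…,v_n) and ṽ = (ṽ_1,…,ṽ_n) be two vectors of positive preference weights satisfying (1−ε)·v_i ≤ ṽ_i ≤ v_i for every i ∈ {1,…,n}. Writing OPT^DP_w({1,…,n}) for the optimal dynamic value computed with the weight vector w, one has (1−ε)·OPT^DP_v({1,…,n}) ≤ OPT^DP_ṽ({1,…,n}) ≤ (1/(1−ε))·OPT^DP_v({1,…,n}). -/

import Mathlib

open Finset

/-- MNL choice probability of product `i` when assortment `S` is offered. -/
noncomputable def phi {n : ℕ} (v : Fin n → ℝ) (S : Finset (Fin n)) (i : Fin n) : ℝ :=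
  v i / (1 + ∑ j ∈ S, v j)

/-- MNL no-purchase probability when assortment `S` is offered. -/
noncomputable def phi0 {n : ℕ} (v : Fin n → ℝ) (S : Finset (Fin n)) : ℝ :=
  1 / (1 + ∑ j ∈ S, v j)

/-- The dynamic-programming value functions `M_t(ℓ)` of the adaptive maximum load
problem over the universe `U`: `M_0(ℓ) = max_i ℓ_i` and
`M_t(ℓ) = max_{S ⊆ U} (φ_0(S)·M_{t-1}(ℓ) + ∑_{i∈S} φ_i(S)·M_{t-1}(ℓ + e_i))`. -/
noncomputable def dpVal {n : ℕ} (v : Fin n → ℝ) (U : Finset (Fin n)) :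
    ℕ → (Fin n → ℕ) → ℝ
  | 0, ℓ => ((univ.sup ℓ : ℕ) : ℝ)
  | t + 1, ℓ =>
      U.powerset.sup' ⟨∅, Finset.empty_mem_powerset U⟩ fun S =>
        phi0 v S * dpVal v U t ℓ +
          ∑ i ∈ S, phi v S i * dpVal v U t (Function.update ℓ i (ℓ i + 1))

/-- `OPT^DP(U) = M_T(0)`: the optimal expected maximum load achievable by an adaptive
policy offering assortments from the universe `U` to `T` sequentially arriving customers
making independent MNL choices. -/
noncomputable def dpOpt {n : ℕ} (v : Fin n → ℝ) (U : Finset (Fin n)) (T : ℕ) : ℝ :=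
  dpVal v U T fun _ => 0

/-!
Write `θ = 1 - ε`. Both inequalities are instances of `θ · OPT_a ≤ OPT_b` whenever
`θ · φ^a_i(S) ≤ φ^b_i(S)` for all `S` and `i ∈ S`, and weights `ṽ` between `θ v` and `v` satisfy
this in both directions.

To compare the two programs, run the `a`-program on real loads, a purchase adding `θ` instead
of `1`. By homogeneity its value at the loads `θ ℓ` is `θ · M^a_t(ℓ)`, and by induction it is
convex in the loads. Convexity replaces an increment `θ` by an increment `1` with probability
`θ` and none otherwise, so the purchase probabilities become `θ φ^a_i ≤ φ^b_i`; since `M^b_t` is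
monotone in the loads, moving the remaining mass to the purchases only helps. Hence, by
induction, the scaled `a`-value at integer loads `ℓ` is at most `M^b_t(ℓ)`.
-/

section

variable {ι : Type*}

theorem natCast_sup_univ [Fintype ι] (ℓ : ι → ℕ) :
    ((univ.sup ℓ : ℕ) : ℝ) = ⨆ i, (ℓ i : ℝ) := by
  rcases isEmpty_or_nonempty ι with _ | _
  · simp
  · rw [← sup'_eq_sup univ_nonempty, Nat.cast_finsetSup', sup'_univ_eq_ciSup]

theorem convexOn_iSup_apply [Finite ι] : ConvexOn ℝ Set.univ fun x : ι → ℝ => ⨆ i, x i := by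
  refine ⟨convex_univ, fun x _ y _ a b ha hb _ => ?_⟩
  rcases isEmpty_or_nonempty ι with _ | _
  · simp
  · refine ciSup_le fun i => ?_
    simp only [Pi.add_apply, Pi.smul_apply, smul_eq_mul]
    gcongr <;> exact le_ciSup (Finite.bddAbove_range _) i

theorem natCast_comp_update_succ [DecidableEq ι] (ℓ : ι → ℕ) (i : ι) :
    ((↑) ∘ Function.update ℓ i (ℓ i + 1) : ι → ℝ) = (↑) ∘ ℓ + Pi.single i 1 := by
  funext j
  rcases eq_or_ne j i with rfl | h <;> simp [*]

theorem add_sum_mul_eq_add_sum_mul_sub {S : Finset ι} {r : ι → ℝ} {r₀ : ℝ}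
    (hr : r₀ + ∑ i ∈ S, r i = 1) (m : ℝ) (m' : ι → ℝ) :
    r₀ * m + ∑ i ∈ S, r i * m' i = m + ∑ i ∈ S, r i * (m' i - m) := by
  simp only [mul_sub, sum_sub_distrib, ← sum_mul]
  linear_combination m * hr

theorem mixture_le_of_mul_le {S : Finset ι} {p q : ι → ℝ} {p₀ q₀ θ m : ℝ} {m' : ι → ℝ}
    (hp : p₀ + ∑ i ∈ S, p i = 1) (hq : q₀ + ∑ i ∈ S, q i = 1)
    (hpq : ∀ i ∈ S, θ * p i ≤ q i) (hm : ∀ i ∈ S, m ≤ m' i) :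
    p₀ * m + ∑ i ∈ S, p i * (θ * m' i + (1 - θ) * m) ≤ q₀ * m + ∑ i ∈ S, q i * m' i := by
  rw [add_sum_mul_eq_add_sum_mul_sub hp, add_sum_mul_eq_add_sum_mul_sub hq]
  refine add_le_add_right (sum_le_sum fun i hi => ?_) m
  calc p i * (θ * m' i + (1 - θ) * m - m) = θ * p i * (m' i - m) := by ring
    _ ≤ q i * (m' i - m) := mul_le_mul_of_nonneg_right (hpq i hi) (sub_nonneg.2 (hm i hi))

end

section

variable {n : ℕ} {v a b : Fin n → ℝ} {θ : ℝ}

theorem one_add_sum_pos (hv : ∀ i, 0 ≤ v i) (S : Finset (Fin n)) : 0 < 1 + ∑ j ∈ S, v j := by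
  have := sum_nonneg fun j (_ : j ∈ S) => hv j
  linarith

theorem phi_nonneg (hv : ∀ i, 0 ≤ v i) (S : Finset (Fin n)) (i : Fin n) : 0 ≤ phi v S i :=
  div_nonneg (hv i) (one_add_sum_pos hv S).le

theorem phi0_nonneg (hv : ∀ i, 0 ≤ v i) (S : Finset (Fin n)) : 0 ≤ phi0 v S :=
  div_nonneg zero_le_one (one_add_sum_pos hv S).le

theorem phi0_add_sum_phi (hv : ∀ i, 0 ≤ v i) (S : Finset (Fin n)) :
    phi0 v S + ∑ i ∈ S, phi v S i = 1 := by
  simp only [phi0, phi]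
  rw [← sum_div, ← add_div, div_self (one_add_sum_pos hv S).ne']

theorem mul_phi_le_phi_of_mul_le_of_le (hb : ∀ i, 0 ≤ b i) (hab : ∀ i, θ * a i ≤ b i)
    (hba : ∀ i, b i ≤ a i) (S : Finset (Fin n)) (i : Fin n) : θ * phi a S i ≤ phi b S i := by
  rw [phi, phi, ← mul_div_assoc]
  exact div_le_div₀ (hb i) (hab i) (one_add_sum_pos hb S)
    (add_le_add_right (sum_le_sum fun j _ => hba j) 1)

theorem mul_phi_le_phi_of_le_of_mul_le (ha : ∀ i, 0 ≤ a i) (hθ : θ ≤ 1) (hab : ∀ i, a i ≤ b i)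
    (hba : ∀ i, θ * b i ≤ a i) (S : Finset (Fin n)) (i : Fin n) : θ * phi a S i ≤ phi b S i := by
  have hb : ∀ i, 0 ≤ b i := fun i => (ha i).trans (hab i)
  rw [phi, phi, ← mul_div_assoc, div_le_div_iff₀ (one_add_sum_pos ha S) (one_add_sum_pos hb S)]
  have hden : θ * (1 + ∑ j ∈ S, b j) ≤ 1 + ∑ j ∈ S, a j := by
    rw [mul_add, mul_one, mul_sum]
    exact add_le_add hθ (sum_le_sum fun j _ => hba j)
  calc θ * a i * (1 + ∑ j ∈ S, b j) = a i * (θ * (1 + ∑ j ∈ S, b j)) := by ring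
    _ ≤ a i * (1 + ∑ j ∈ S, a j) := mul_le_mul_of_nonneg_left hden (ha i)
    _ ≤ b i * (1 + ∑ j ∈ S, a j) := mul_le_mul_of_nonneg_right (hab i) (one_add_sum_pos ha S).le

end

section

variable {n : ℕ} {U : Finset (Fin n)} {θ : ℝ}

theorem le_dpVal_succ (v : Fin n → ℝ) (t : ℕ) (ℓ : Fin n → ℕ)
    {S : Finset (Fin n)} (hS : S ⊆ U) :
    phi0 v S * dpVal v U t ℓ + ∑ i ∈ S, phi v S i * dpVal v U t (Function.update ℓ i (ℓ i + 1))
      ≤ dpVal v U (t + 1) ℓ :=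
  le_sup' (fun S => phi0 v S * dpVal v U t ℓ +
    ∑ i ∈ S, phi v S i * dpVal v U t (Function.update ℓ i (ℓ i + 1))) (mem_powerset.2 hS)

theorem dpVal_mono {v : Fin n → ℝ} (hv : ∀ i, 0 ≤ v i) (t : ℕ) : Monotone (dpVal v U t) := by
  induction t with
  | zero => exact fun ℓ ℓ' h => Nat.cast_le.2 (sup_mono_fun fun i _ => h i)
  | succ t ih =>
    intro ℓ ℓ' h
    refine sup'_mono_fun fun S _ => ?_
    refine add_le_add (mul_le_mul_of_nonneg_left (ih h) (phi0_nonneg hv S))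
      (sum_le_sum fun i _ => mul_le_mul_of_nonneg_left (ih ?_) (phi_nonneg hv S i))
    exact update_le_update_iff.2 ⟨Nat.add_le_add_right (h i) 1, fun j _ => h j⟩

noncomputable def dpValScaled (v : Fin n → ℝ) (U : Finset (Fin n)) (θ : ℝ) :
    ℕ → (Fin n → ℝ) → ℝ
  | 0, x => ⨆ i, x i
  | t + 1, x =>
      U.powerset.sup' ⟨∅, empty_mem_powerset U⟩ fun S =>
        phi0 v S * dpValScaled v U θ t x +
          ∑ i ∈ S, phi v S i * dpValScaled v U θ t (x + Pi.single i θ)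

theorem le_dpValScaled_succ (v : Fin n → ℝ) (t : ℕ)
    (x : Fin n → ℝ) {S : Finset (Fin n)} (hS : S ⊆ U) :
    phi0 v S * dpValScaled v U θ t x + ∑ i ∈ S, phi v S i * dpValScaled v U θ t (x + Pi.single i θ)
      ≤ dpValScaled v U θ (t + 1) x := by
  rw [dpValScaled]
  exact le_sup' (fun S => phi0 v S * dpValScaled v U θ t x +
    ∑ i ∈ S, phi v S i * dpValScaled v U θ t (x + Pi.single i θ)) (mem_powerset.2 hS)

theorem convexOn_dpValScaled {v : Fin n → ℝ} (hv : ∀ i, 0 ≤ v i) (t : ℕ) :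
    ConvexOn ℝ Set.univ (dpValScaled v U θ t) := by
  induction t with
  | zero => exact convexOn_iSup_apply
  | succ t ih =>
    refine ⟨convex_univ, fun x _ y _ a b ha hb hab => ?_⟩
    have hK : ∀ z w : Fin n → ℝ,
        dpValScaled v U θ t (a • z + b • w) ≤
          a * dpValScaled v U θ t z + b * dpValScaled v U θ t w :=
      fun z w => ih.2 trivial trivial ha hb hab
    have hshift : ∀ i, a • x + b • y + Pi.single i θ =
        a • (x + Pi.single i θ) + b • (y + Pi.single i θ) := fun i => by
      rw [smul_add, smul_add, add_add_add_comm, ← add_smul, hab, one_smul]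
    rw [dpValScaled]
    refine sup'_le _ _ fun S hS => ?_
    rw [mem_powerset] at hS
    calc phi0 v S * dpValScaled v U θ t (a • x + b • y) +
          ∑ i ∈ S, phi v S i * dpValScaled v U θ t (a • x + b • y + Pi.single i θ)
        ≤ phi0 v S * (a * dpValScaled v U θ t x + b * dpValScaled v U θ t y) +
          ∑ i ∈ S, phi v S i * (a * dpValScaled v U θ t (x + Pi.single i θ) +
            b * dpValScaled v U θ t (y + Pi.single i θ)) := by
          simp only [hshift]
          exact add_le_add (mul_le_mul_of_nonneg_left (hK x y) (phi0_nonneg hv S))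
            (sum_le_sum fun i _ => mul_le_mul_of_nonneg_left (hK _ _) (phi_nonneg hv S i))
      _ = a * (phi0 v S * dpValScaled v U θ t x +
            ∑ i ∈ S, phi v S i * dpValScaled v U θ t (x + Pi.single i θ)) +
          b * (phi0 v S * dpValScaled v U θ t y +
            ∑ i ∈ S, phi v S i * dpValScaled v U θ t (y + Pi.single i θ)) := by
          simp only [mul_add, sum_add_distrib, mul_sum, mul_left_comm a, mul_left_comm b]
          ring
      _ ≤ a • dpValScaled v U θ (t + 1) x + b • dpValScaled v U θ (t + 1) y := by
          simp only [smul_eq_mul]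
          exact add_le_add (mul_le_mul_of_nonneg_left (le_dpValScaled_succ v t x hS) ha)
            (mul_le_mul_of_nonneg_left (le_dpValScaled_succ v t y hS) hb)

theorem dpValScaled_smul_natCast (v : Fin n → ℝ) (hθ : 0 ≤ θ) (t : ℕ) (ℓ : Fin n → ℕ) :
    dpValScaled v U θ t (θ • ((↑) ∘ ℓ)) = θ * dpVal v U t ℓ := by
  induction t generalizing ℓ with
  | zero =>
    rw [dpValScaled, dpVal, natCast_sup_univ, Real.mul_iSup_of_nonneg hθ]
    rfl
  | succ t ih =>
    have hshift : ∀ i, θ • ((↑) ∘ ℓ) + Pi.single i θ =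
        θ • ((↑) ∘ Function.update ℓ i (ℓ i + 1) : Fin n → ℝ) := fun i => by
      rw [natCast_comp_update_succ, smul_add, ← Pi.single_smul', smul_eq_mul, mul_one]
    rw [dpValScaled, dpVal]
    refine (sup'_congr _ rfl fun S _ => ?_).trans (mul₀_sup' hθ _ _ _).symm
    simp only [hshift, ih, mul_add, mul_sum, mul_left_comm θ]

theorem dpValScaled_natCast_le_dpVal {a b : Fin n → ℝ} (ha : ∀ i, 0 ≤ a i) (hb : ∀ i, 0 ≤ b i)
    (hθ₀ : 0 ≤ θ) (hθ₁ : θ ≤ 1) (hab : ∀ S ⊆ U, ∀ i ∈ S, θ * phi a S i ≤ phi b S i)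
    (t : ℕ) (ℓ : Fin n → ℕ) :
    dpValScaled a U θ t ((↑) ∘ ℓ) ≤ dpVal b U t ℓ := by
  induction t generalizing ℓ with
  | zero => exact (natCast_sup_univ ℓ).ge
  | succ t ih =>
    have hconv : ∀ i, dpValScaled a U θ t ((↑) ∘ ℓ + Pi.single i θ) ≤
        θ * dpVal b U t (Function.update ℓ i (ℓ i + 1)) + (1 - θ) * dpVal b U t ℓ := fun i =>
      calc dpValScaled a U θ t ((↑) ∘ ℓ + Pi.single i θ)
          = dpValScaled a U θ t
              (θ • ((↑) ∘ Function.update ℓ i (ℓ i + 1)) + (1 - θ) • ((↑) ∘ ℓ)) := by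
            rw [natCast_comp_update_succ, smul_add, ← Pi.single_smul', smul_eq_mul, mul_one,
              add_right_comm, ← add_smul, add_sub_cancel, one_smul]
        _ ≤ θ * dpValScaled a U θ t ((↑) ∘ Function.update ℓ i (ℓ i + 1)) +
              (1 - θ) * dpValScaled a U θ t ((↑) ∘ ℓ) :=
            (convexOn_dpValScaled ha t).2 trivial trivial hθ₀ (sub_nonneg.2 hθ₁) (by ring)
        _ ≤ θ * dpVal b U t (Function.update ℓ i (ℓ i + 1)) + (1 - θ) * dpVal b U t ℓ := by
            have := sub_nonneg.2 hθ₁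
            gcongr <;> exact ih _
    rw [dpValScaled]
    refine sup'_le _ _ fun S hS => ?_
    rw [mem_powerset] at hS
    calc phi0 a S * dpValScaled a U θ t ((↑) ∘ ℓ) +
          ∑ i ∈ S, phi a S i * dpValScaled a U θ t ((↑) ∘ ℓ + Pi.single i θ)
        ≤ phi0 a S * dpVal b U t ℓ + ∑ i ∈ S, phi a S i *
            (θ * dpVal b U t (Function.update ℓ i (ℓ i + 1)) + (1 - θ) * dpVal b U t ℓ) :=
          add_le_add (mul_le_mul_of_nonneg_left (ih ℓ) (phi0_nonneg ha S))
            (sum_le_sum fun i _ => mul_le_mul_of_nonneg_left (hconv i) (phi_nonneg ha S i))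
      _ ≤ phi0 b S * dpVal b U t ℓ +
            ∑ i ∈ S, phi b S i * dpVal b U t (Function.update ℓ i (ℓ i + 1)) :=
          mixture_le_of_mul_le (phi0_add_sum_phi ha S) (phi0_add_sum_phi hb S) (hab S hS)
            fun i _ => dpVal_mono hb t (le_update_iff.2 ⟨Nat.le_succ _, fun _ _ => le_rfl⟩)
      _ ≤ dpVal b U (t + 1) ℓ := le_dpVal_succ b t ℓ hS

theorem mul_dpOpt_le_dpOpt {a b : Fin n → ℝ} (ha : ∀ i, 0 ≤ a i) (hb : ∀ i, 0 ≤ b i)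
    (hθ₀ : 0 ≤ θ) (hθ₁ : θ ≤ 1) (hab : ∀ S ⊆ U, ∀ i ∈ S, θ * phi a S i ≤ phi b S i) (T : ℕ) :
    θ * dpOpt a U T ≤ dpOpt b U T := by
  have hzero : θ • ((↑) ∘ fun _ => 0 : Fin n → ℝ) = (↑) ∘ fun _ => 0 := by
    ext
    simp
  have h := dpValScaled_natCast_le_dpVal ha hb hθ₀ hθ₁ hab T fun _ => 0
  rwa [← hzero, dpValScaled_smul_natCast a hθ₀] at h

end

/-- Stability of the optimal dynamic value with respect to weight alterations: if
`(1-ε)·v_i ≤ ṽ_i ≤ v_i` for every product `i`, then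
`(1-ε)·OPT^DP_v ≤ OPT^DP_ṽ ≤ (1/(1-ε))·OPT^DP_v` (over the full universe). -/
theorem dpOpt_stable_under_weight_alteration
    (n T : ℕ) (ε : ℝ) (hε0 : 0 < ε) (hε1 : ε < 1)
    (v vt : Fin n → ℝ) (hv : ∀ i, 0 < v i) (hvt : ∀ i, 0 < vt i)
    (hlow : ∀ i, (1 - ε) * v i ≤ vt i) (hhigh : ∀ i, vt i ≤ v i) :
    (1 - ε) * dpOpt v Finset.univ T ≤ dpOpt vt Finset.univ T ∧
      dpOpt vt Finset.univ T ≤ (1 / (1 - ε)) * dpOpt v Finset.univ T := by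
  have hθ₀ : 0 ≤ 1 - ε := by linarith
  have hθ₁ : 1 - ε ≤ 1 := by linarith
  have hv₀ : ∀ i, 0 ≤ v i := fun i => (hv i).le
  have hvt₀ : ∀ i, 0 ≤ vt i := fun i => (hvt i).le
  constructor
  · exact mul_dpOpt_le_dpOpt hv₀ hvt₀ hθ₀ hθ₁
      (fun S _ i _ => mul_phi_le_phi_of_mul_le_of_le hvt₀ hlow hhigh S i) T
  · rw [one_div, inv_mul_eq_div, le_div_iff₀ (by linarith), mul_comm]
    exact mul_dpOpt_le_dpOpt hvt₀ hv₀ hθ₀ hθ₁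
      (fun S _ i _ => mul_phi_le_phi_of_le_of_mul_le hvt₀ hθ₁ hhigh hlow S i) T
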